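/- Let -1 ≤ p < 0 and let H be a complex Hilbert space. An operator A ∈ B(H)⁺ is an orthogonal projection (i.e. A² = A and A* = A) if and only if I 𝔪ₚ A = A, where I is the identity operator. -/

import Mathlib

/-!
When both arguments are functions of one self-adjoint operator, the Kubo–Ando mean is computed
pointwise on the spectrum. Hence `(I + ε) 𝔪ₚ (A + ε) = f_ε(A)` with
`f_ε(t) = (½((1 + ε)ᵖ + (t + ε)ᵖ))^(1/p)`. For `p < 0` the functions `f_ε` are restrictions of
one function jointly continuous in `(ε, t)` up to `ε = 0`, so they converge uniformly on `σ(A)`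
to `φ(t) = t (½(1 + t⁻ᵖ))^(1/p)`, and the strong-limit axiom gives `I 𝔪ₚ A = φ(A)`. As
`φ(t) = t` exactly for `t ∈ {0, 1}`, the equation `I 𝔪ₚ A = A` says `σ(A) ⊆ {0, 1}`, which for a
positive operator means being a projection.
-/

open scoped NNReal

variable {H : Type*} [NormedAddCommGroup H] [InnerProductSpace ℂ H] [CompleteSpace H]

/-- `m` is the Kubo–Ando `p`-th power mean on positive operators: it is given by
`A 𝔪ₚ B = A^(1/2) ((1 + (A^(-1/2) B A^(-1/2))^p)/2)^(1/p) A^(1/2)` on invertible positive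
operators, and is determined on all positive operators by the strong limit
`(A 𝔪ₚ B) x = lim_{ε→0⁺} ((A + εI) 𝔪ₚ (B + εI)) x`. -/
def IsKuboAndoPowerMean (p : ℝ) (m : (H →L[ℂ] H) → (H →L[ℂ] H) → (H →L[ℂ] H)) : Prop :=
  (∀ A B : H →L[ℂ] H, 0 ≤ A → 0 ≤ B → IsUnit A → IsUnit B →
      m A B = A ^ ((2 : ℝ)⁻¹) *
        ((2 : ℝ)⁻¹ • (1 + (A ^ (-(2 : ℝ)⁻¹) * B * A ^ (-(2 : ℝ)⁻¹)) ^ p)) ^ p⁻¹ *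
        A ^ ((2 : ℝ)⁻¹)) ∧
  (∀ A B : H →L[ℂ] H, 0 ≤ A → 0 ≤ B → ∀ x : H,
      Filter.Tendsto (fun ε : ℝ => (m (A + ε • 1) (B + ε • 1)) x)
        (nhdsWithin 0 (Set.Ioi 0)) (nhds ((m A B) x)))

open Real Filter Topology

/-- For `a, b > 0` this is the power mean `(½(aᵖ + bᵖ))^(1/p)` (`powerMean_eq`); for `p < 0` this
form extends it continuously by `0` to `b = 0`. -/
noncomputable def powerMean (p a b : ℝ) : ℝ := a * b * (2⁻¹ * (a ^ (-p) + b ^ (-p))) ^ p⁻¹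

lemma powerMean_eq {p a b : ℝ} (hp : p ≠ 0) (ha : 0 < a) (hb : 0 < b) :
    powerMean p a b = (2⁻¹ * (a ^ p + b ^ p)) ^ p⁻¹ := by
  have hsum : 2⁻¹ * (a ^ p + b ^ p) = (a * b) ^ p * (2⁻¹ * (a ^ (-p) + b ^ (-p))) := by
    rw [mul_rpow ha.le hb.le, rpow_neg ha.le, rpow_neg hb.le]
    field_simp
    ring
  rw [hsum, mul_rpow (by positivity) (by positivity), rpow_rpow_inv (by positivity) hp,
    powerMean]

lemma continuousOn_powerMean {p : ℝ} (hp : p < 0) :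
    ContinuousOn (fun x : ℝ × ℝ => powerMean p x.1 x.2) {x | 0 < x.1 ∧ 0 ≤ x.2} := by
  have hrpow : Continuous fun t : ℝ => t ^ (-p) := continuous_rpow_const (by linarith)
  rintro ⟨a, b⟩ ⟨ha, hb⟩
  refine ContinuousAt.continuousWithinAt ?_
  have hbase : 0 < 2⁻¹ * (a ^ (-p) + b ^ (-p)) := by
    have := rpow_pos_of_pos ha (-p)
    have := rpow_nonneg hb (-p)
    positivity
  unfold powerMean
  refine (by fun_prop : ContinuousAt (fun x : ℝ × ℝ => x.1 * x.2) _).mul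
    (ContinuousAt.rpow_const ?_ (Or.inl hbase.ne'))
  exact (((hrpow.comp continuous_fst).add (hrpow.comp continuous_snd)).const_mul _).continuousAt

lemma powerMean_one_eq_self_iff {p t : ℝ} (hp : p < 0) (ht : 0 ≤ t) :
    powerMean p 1 t = t ↔ t = 0 ∨ t = 1 := by
  have hbase : 0 ≤ 2⁻¹ * (1 + t ^ (-p)) := by have := rpow_nonneg ht (-p); positivity
  have hinv : t ^ (-p) = 1 ↔ t = 1 := by
    simpa using rpow_left_inj ht zero_le_one (by linarith : -p ≠ 0)
  have hhalf : 2⁻¹ * (1 + t ^ (-p)) = 1 ↔ t ^ (-p) = 1 := by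
    constructor <;> intro h <;> linarith
  rw [powerMean, one_rpow, one_mul, mul_right_eq_self₀, rpow_inv_eq hbase zero_le_one hp.ne,
    one_rpow, hhalf, hinv, or_comm]

lemma rpow_half_mul_mul_rpow_half_eq_powerMean {p a b : ℝ} (hp : p ≠ 0) (ha : 0 < a)
    (hb : 0 < b) :
    a ^ (2⁻¹ : ℝ) * (2⁻¹ * (1 + (a ^ (-(2⁻¹ : ℝ)) * b * a ^ (-(2⁻¹ : ℝ))) ^ p)) ^ p⁻¹ *
      a ^ (2⁻¹ : ℝ) = powerMean p a b := by
  have hconj : a ^ (-(2⁻¹ : ℝ)) * b * a ^ (-(2⁻¹ : ℝ)) = b / a := by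
    rw [mul_right_comm, ← rpow_add ha, show -(2⁻¹ : ℝ) + -2⁻¹ = -1 by norm_num, rpow_neg_one,
      div_eq_mul_inv, mul_comm]
  have hsqrt : a ^ (2⁻¹ : ℝ) * a ^ (2⁻¹ : ℝ) = a := by
    rw [← rpow_add ha, show (2⁻¹ : ℝ) + 2⁻¹ = 1 by norm_num, rpow_one]
  have hfactor : 2⁻¹ * (a ^ p + b ^ p) = a ^ p * (2⁻¹ * (1 + (b / a) ^ p)) := by
    rw [div_rpow hb.le ha.le]
    field_simp [(rpow_pos_of_pos ha p).ne']
  have hbase : 0 ≤ 2⁻¹ * (1 + (b / a) ^ p) := by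
    have := rpow_nonneg (div_pos hb ha).le p; positivity
  rw [hconj, mul_right_comm, hsqrt, powerMean_eq hp ha hb, hfactor,
    mul_rpow (rpow_nonneg ha.le p) hbase, rpow_rpow_inv ha.le hp]

namespace IsKuboAndoPowerMean

variable {p : ℝ} {m : (H →L[ℂ] H) → (H →L[ℂ] H) → (H →L[ℂ] H)}

lemma apply_cfc_cfc (hm : IsKuboAndoPowerMean p m) (hp : p ≠ 0) {A : H →L[ℂ] H}
    (hA : IsSelfAdjoint A) {f g : ℝ → ℝ} (hf : ∀ t ∈ spectrum ℝ A, 0 < f t)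
    (hg : ∀ t ∈ spectrum ℝ A, 0 < g t) (hfc : ContinuousOn f (spectrum ℝ A))
    (hgc : ContinuousOn g (spectrum ℝ A)) :
    m (cfc f A) (cfc g A) = cfc (fun t => powerMean p (f t) (g t)) A := by
  have hpow : ∀ h : ℝ → ℝ, (∀ t ∈ spectrum ℝ A, 0 < h t) → ContinuousOn h (spectrum ℝ A) →
      ∀ r : ℝ, cfc h A ^ r = cfc (fun t => h t ^ r) A :=
    fun h hpos hcont r => CFC.cfc_rpow hpos hcont hA
  have hpowc : ∀ r : ℝ, ContinuousOn (fun t => f t ^ r) (spectrum ℝ A) :=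
    fun r => hfc.rpow_const fun t ht => Or.inl (hf t ht).ne'
  set k : ℝ → ℝ := fun t => f t ^ (-(2⁻¹ : ℝ)) * g t * f t ^ (-(2⁻¹ : ℝ))
  have hkpos : ∀ t ∈ spectrum ℝ A, 0 < k t := fun t ht => by
    have := rpow_pos_of_pos (hf t ht) (-(2⁻¹ : ℝ)); have := hg t ht; positivity
  have hkc : ContinuousOn k (spectrum ℝ A) := ((hpowc _).mul hgc).mul (hpowc _)
  have hkpc : ContinuousOn (fun t => k t ^ p) (spectrum ℝ A) :=
    hkc.rpow_const fun t ht => Or.inl (hkpos t ht).ne'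
  have hnpos : ∀ t ∈ spectrum ℝ A, 0 < 2⁻¹ * (1 + k t ^ p) := fun t ht => by
    have := rpow_pos_of_pos (hkpos t ht) p; positivity
  have hnc : ContinuousOn (fun t => 2⁻¹ * (1 + k t ^ p)) (spectrum ℝ A) := by fun_prop
  have hmid : (2⁻¹ : ℝ) • (1 + cfc (fun t => k t ^ p) A) =
      cfc (fun t => 2⁻¹ * (1 + k t ^ p)) A := by
    rw [← map_one (algebraMap ℝ (H →L[ℂ] H)), ← cfc_const_add 1 _ A hkpc hA, ← cfc_smul _ _ A]
    rfl
  have hnpc : ContinuousOn (fun t => (2⁻¹ * (1 + k t ^ p)) ^ p⁻¹) (spectrum ℝ A) :=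
    hnc.rpow_const fun t ht => Or.inl (hnpos t ht).ne'
  rw [hm.1 _ _ (cfc_nonneg fun t ht => (hf t ht).le) (cfc_nonneg fun t ht => (hg t ht).le)
      ((isUnit_cfc_iff f A hfc hA).2 fun t ht => (hf t ht).ne')
      ((isUnit_cfc_iff g A hgc hA).2 fun t ht => (hg t ht).ne'),
    hpow f hf hfc, hpow f hf hfc, ← cfc_mul _ _ A (hpowc _) hgc,
    ← cfc_mul (fun t => f t ^ (-(2⁻¹ : ℝ)) * g t) _ A ((hpowc _).mul hgc) (hpowc _),
    hpow k hkpos hkc, hmid, hpow _ hnpos hnc, ← cfc_mul _ _ A (hpowc _) hnpc,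
    ← cfc_mul (fun t => f t ^ (2⁻¹ : ℝ) * (2⁻¹ * (1 + k t ^ p)) ^ p⁻¹) _ A
      ((hpowc _).mul hnpc) (hpowc _)]
  exact cfc_congr fun t ht => rpow_half_mul_mul_rpow_half_eq_powerMean hp (hf t ht) (hg t ht)

lemma apply_add_smul_one (hm : IsKuboAndoPowerMean p m) (hp : p ≠ 0) {A : H →L[ℂ] H}
    (hA : 0 ≤ A) {ε : ℝ} (hε : 0 < ε) :
    m (1 + ε • 1) (A + ε • 1) = cfc (fun t => powerMean p (1 + ε) (t + ε)) A := by
  have hone : (1 : H →L[ℂ] H) + ε • 1 = cfc (fun _ => 1 + ε) A := by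
    rw [cfc_const (1 + ε) A, Algebra.algebraMap_eq_smul_one, add_smul, one_smul]
  have hshift : A + ε • 1 = cfc (fun t => t + ε) A := by
    rw [cfc_add_const ε (fun t => t) A, cfc_id' ℝ A, Algebra.algebraMap_eq_smul_one]
  rw [hone, hshift]
  exact hm.apply_cfc_cfc hp hA.isSelfAdjoint (fun _ _ => by positivity)
    (fun t ht => by linarith [spectrum_nonneg_of_nonneg hA ht]) continuousOn_const
    (by fun_prop)

lemma apply_one_eq_cfc (hm : IsKuboAndoPowerMean p m) (hp : p < 0) {A : H →L[ℂ] H}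
    (hA : 0 ≤ A) :
    m 1 A = cfc (powerMean p 1) A := by
  set F : ℝ → ℝ → ℝ := fun ε t => powerMean p (1 + ε) (t + ε) with hF
  have hmaps : ∀ ε t, 0 ≤ ε → t ∈ spectrum ℝ A → 0 < 1 + ε ∧ 0 ≤ t + ε := fun ε t hε ht =>
    ⟨by linarith, by linarith [spectrum_nonneg_of_nonneg hA ht]⟩
  have hFc : ContinuousOn (Function.uncurry F) (Set.Icc 0 1 ×ˢ spectrum ℝ A) :=
    (continuousOn_powerMean hp).comp (f := fun x : ℝ × ℝ => (1 + x.1, x.2 + x.1)) (by fun_prop)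
      fun x hx => hmaps x.1 x.2 hx.1.1 hx.2
  have hunif : TendstoUniformlyOn F (F 0) (𝓝[>] 0) (spectrum ℝ A) := by
    have := ((isCompact_Icc.prod (spectrum.isCompact A)).uniformContinuousOn_of_continuous
      hFc).tendstoUniformlyOn (F := F) (Set.left_mem_Icc.2 zero_le_one)
    have hle : 𝓝[>] (0 : ℝ) ≤ 𝓝[Set.Icc 0 1] 0 := by
      rw [nhdsWithin_Icc_eq_nhdsGE zero_lt_one]
      exact nhdsWithin_mono _ Set.Ioi_subset_Ici_self
    exact fun u hu => (this u hu).filter_mono hle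
  have hlim : Tendsto (fun ε => cfc (F ε) A) (𝓝[>] 0) (𝓝 (cfc (F 0) A)) := by
    refine tendsto_cfc_fun hunif (eventually_nhdsWithin_of_forall fun ε hε => ?_)
    exact (continuousOn_powerMean hp).comp (f := fun t => (1 + ε, t + ε)) (by fun_prop)
      fun t ht => hmaps ε t (le_of_lt hε) ht
  have hF0 : F 0 = powerMean p 1 := by simp only [hF, add_zero]
  ext x
  refine tendsto_nhds_unique (hm.2 1 A zero_le_one hA x) ?_
  rw [← hF0]
  refine (((ContinuousLinearMap.apply ℂ H x).continuous.tendsto _).comp hlim).congr' ?_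
  filter_upwards [self_mem_nhdsWithin] with ε hε
  simp [hm.apply_add_smul_one hp.ne hA hε, F]

end IsKuboAndoPowerMean

theorem isProjection_iff_kuboAndo_one_general (p : ℝ) (hp1 : p < 0)
    (m : (H →L[ℂ] H) → (H →L[ℂ] H) → (H →L[ℂ] H)) (hm : IsKuboAndoPowerMean p m)
    (A : H →L[ℂ] H) (hA : 0 ≤ A) :
    (A * A = A ∧ star A = A) ↔ m 1 A = A := by
  have hsa : IsSelfAdjoint A := hA.isSelfAdjoint
  have hcont : ContinuousOn (powerMean p 1) (spectrum ℝ A) :=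
    (continuousOn_powerMean hp1).comp (f := fun t => (1, t)) (by fun_prop)
      fun t ht => ⟨one_pos, spectrum_nonneg_of_nonneg hA ht⟩
  have hfix : (spectrum ℝ A).EqOn (powerMean p 1) id ↔ spectrum ℝ A ⊆ {0, 1} :=
    forall₂_congr fun t ht => powerMean_one_eq_self_iff hp1 (spectrum_nonneg_of_nonneg hA ht)
  calc (A * A = A ∧ star A = A) ↔ spectrum ℝ A ⊆ {0, 1} := by
        rw [and_iff_left hsa.star_eq]
        exact isIdempotentElem_iff_spectrum_subset ℝ A hsa
    _ ↔ (spectrum ℝ A).EqOn (powerMean p 1) id := hfix.symm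
    _ ↔ cfc (powerMean p 1) A = cfc id A := (cfc_eq_cfc_iff_eqOn hsa hcont).symm
    _ ↔ m 1 A = A := by rw [hm.apply_one_eq_cfc hp1 hA, cfc_id ℝ A]

/-- For `-1 ≤ p < 0`, a positive operator `A` is an orthogonal projection
iff `I 𝔪ₚ A = A`. -/
theorem isProjection_iff_kuboAndo_one (p : ℝ) (hp0 : -1 ≤ p) (hp1 : p < 0)
    (m : (H →L[ℂ] H) → (H →L[ℂ] H) → (H →L[ℂ] H)) (hm : IsKuboAndoPowerMean p m)
    (A : H →L[ℂ] H) (hA : 0 ≤ A) :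
    (A * A = A ∧ star A = A) ↔ m 1 A = A :=
  isProjection_iff_kuboAndo_one_general p hp1 m hm A hA
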